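/- If a variety V (in a signature L possibly without constants) is coherent, then for any finite nonempty set of new constants c̄, the variety V_{c̄} of L(c̄)-algebras defined by all L-identities valid in V is also coherent. -/

import Mathlib

/-- An algebraic signature: a type of operation symbols with arities. -/
structure Signature where
  Op : Type
  arity : Op → ℕ

/-- Terms over a signature with variables from `X`. -/
inductive Term (σ : Signature) (X : Type) : Type where
  | var : X → Term σ X
  | op : (o : σ.Op) → (Fin (σ.arity o) → Term σ X) → Term σ X

/-- An algebra for the signature `σ`. -/
structure Alg (σ : Signature) where
  carrier : Type
  interp : (o : σ.Op) → (Fin (σ.arity o) → carrier) → carrier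

/-- Evaluation of a term in an algebra under a valuation. -/
def Term.eval {σ : Signature} {X : Type} (A : Alg σ) (v : X → A.carrier) :
    Term σ X → A.carrier
  | .var x => v x
  | .op o ts => A.interp o fun i => (ts i).eval A v

/-- Homomorphisms of algebras. -/
structure Hom {σ : Signature} (A B : Alg σ) where
  toFun : A.carrier → B.carrier
  map_op : ∀ (o : σ.Op) (as : Fin (σ.arity o) → A.carrier),
    toFun (A.interp o as) = B.interp o fun i => toFun (as i)

/-- An equational theory (defining a variety). -/
structure EqTheory (σ : Signature) where
  eqs : Set (Term σ ℕ × Term σ ℕ)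

/-- `A` is a model of the equational theory `E`, i.e. a member of the variety. -/
def Alg.Models {σ : Signature} (A : Alg σ) (E : EqTheory σ) : Prop :=
  ∀ p ∈ E.eqs, ∀ v : ℕ → A.carrier, p.1.eval A v = p.2.eval A v

/-- Equational consequence: `s ≈ t` holds in every member of the variety. -/
def TermRel (σ : Signature) (E : EqTheory σ) (X : Type) (s t : Term σ X) : Prop :=
  ∀ A : Alg σ, A.Models E → ∀ v : X → A.carrier, s.eval A v = t.eval A v

def freeSetoid (σ : Signature) (E : EqTheory σ) (X : Type) : Setoid (Term σ X) where
  r := TermRel σ E X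
  iseqv := ⟨fun _ _ _ _ => rfl, fun h A hA v => (h A hA v).symm,
    fun h1 h2 A hA v => (h1 A hA v).trans (h2 A hA v)⟩

def FreeCarrier (σ : Signature) (E : EqTheory σ) (X : Type) : Type :=
  Quotient (freeSetoid σ E X)

/-- The free algebra of the variety axiomatised by `E` over the set `X` of generators. -/
noncomputable def FreeAlg (σ : Signature) (E : EqTheory σ) (X : Type) : Alg σ where
  carrier := FreeCarrier σ E X
  interp o as := Quotient.mk (freeSetoid σ E X) (Term.op o fun i => Quotient.out (as i))

/-- The generator `x` of the free algebra. -/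
def FreeAlg.gen (σ : Signature) (E : EqTheory σ) (X : Type) (x : X) :
    (FreeAlg σ E X).carrier :=
  Quotient.mk (freeSetoid σ E X) (Term.var x)

def Term.rename {σ : Signature} {X Y : Type} (h : X → Y) : Term σ X → Term σ Y
  | .var x => .var (h x)
  | .op o ts => .op o fun i => (ts i).rename h

theorem Term.eval_rename {σ : Signature} {X Y : Type} (A : Alg σ) (h : X → Y)
    (v : Y → A.carrier) : ∀ t : Term σ X, (t.rename h).eval A v = t.eval A (v ∘ h)
  | .var _ => rfl
  | .op o ts => by
      show A.interp o _ = A.interp o _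
      exact congrArg _ (funext fun i => Term.eval_rename A h v (ts i))

/-- The natural map between free algebras induced by a map of variables. -/
def FreeAlg.rename {σ : Signature} {E : EqTheory σ} {X Y : Type} (h : X → Y) :
    (FreeAlg σ E X).carrier → (FreeAlg σ E Y).carrier :=
  Quotient.lift (fun t : Term σ X => Quotient.mk (freeSetoid σ E Y) (t.rename h))
    (fun s t hst => Quotient.sound (fun A hA v => by
      rw [Term.eval_rename, Term.eval_rename]; exact hst A hA (v ∘ h)))

/-- Congruences on an algebra. -/
def IsCong {σ : Signature} (A : Alg σ) (r : A.carrier → A.carrier → Prop) : Prop :=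
  Equivalence r ∧ ∀ (o : σ.Op) (as bs : Fin (σ.arity o) → A.carrier),
    (∀ i, r (as i) (bs i)) → r (A.interp o as) (A.interp o bs)

/-- The congruence generated by a set of pairs. -/
def cgGen {σ : Signature} (A : Alg σ) (S : Set (A.carrier × A.carrier)) :
    A.carrier → A.carrier → Prop :=
  fun a b => ∀ r, IsCong A r → (∀ p ∈ S, r p.1 p.2) → r a b

/-- The kernel congruence of a homomorphism. -/
def kerHom {σ : Signature} {A B : Alg σ} (f : Hom A B) :
    A.carrier → A.carrier → Prop :=
  fun a b => f.toFun a = f.toFun b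

/-- A relation is a compact (finitely generated) congruence. -/
def CompactRel {σ : Signature} (A : Alg σ) (Θ : A.carrier → A.carrier → Prop) : Prop :=
  ∃ S : Set (A.carrier × A.carrier), S.Finite ∧ Θ = cgGen A S

def FinGenerated (σ : Signature) (E : EqTheory σ) (A : Alg σ) : Prop :=
  ∃ (n : ℕ) (f : Hom (FreeAlg σ E (Fin n)) A), Function.Surjective f.toFun

/-- `A` is finitely presented: a quotient of a finitely generated free algebra by a
compact congruence. -/
def FinPresented (σ : Signature) (E : EqTheory σ) (A : Alg σ) : Prop :=
  ∃ (n : ℕ) (f : Hom (FreeAlg σ E (Fin n)) A),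
    Function.Surjective f.toFun ∧ CompactRel (FreeAlg σ E (Fin n)) (kerHom f)

def IsSubalg {σ : Signature} (A : Alg σ) (S : Set A.carrier) : Prop :=
  ∀ (o : σ.Op) (as : Fin (σ.arity o) → A.carrier), (∀ i, as i ∈ S) → A.interp o as ∈ S

/-- The subuniverse generated by `G`. -/
def subGen {σ : Signature} (A : Alg σ) (G : Set A.carrier) : Set A.carrier :=
  {a | ∀ T, IsSubalg A T → G ⊆ T → a ∈ T}

/-- The subalgebra on a closed subset. -/
def Alg.subAlg {σ : Signature} (A : Alg σ) (S : Set A.carrier) (hS : IsSubalg A S) :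
    Alg σ where
  carrier := ↥S
  interp o as := ⟨A.interp o fun i => (as i).1, hS o _ fun i => (as i).2⟩

/-- A variety is coherent if every finitely generated subalgebra of a finitely
presented member is finitely presented. -/
def Coherent (σ : Signature) (E : EqTheory σ) : Prop :=
  ∀ B : Alg σ, B.Models E → FinPresented σ E B →
    ∀ (S : Set B.carrier) (hS : IsSubalg B S),
      (∃ G : Set B.carrier, G.Finite ∧ S = subGen B G) →
      FinPresented σ E (B.subAlg S hS)

/-- The signature `σ` expanded with `k` new constants. -/
def sigC (σ : Signature) (k : ℕ) : Signature where
  Op := σ.Op ⊕ Fin k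
  arity := Sum.elim σ.arity fun _ => 0

/-- The inclusion of `σ`-terms into `σ(c̄)`-terms. -/
def Term.inclSig {σ : Signature} {k : ℕ} {X : Type} : Term σ X → Term (sigC σ k) X
  | .var x => .var x
  | .op o ts => .op (Sum.inl o) fun i => (ts i).inclSig

/-- The variety of `σ(c̄)`-algebras defined by all `σ`-identities valid in the
variety axiomatised by `E`. -/
def cTheory (σ : Signature) (E : EqTheory σ) (k : ℕ) : EqTheory (sigC σ k) where
  eqs := {p | ∃ s t : Term σ ℕ, TermRel σ E ℕ s t ∧ p = (s.inclSig, t.inclSig)}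

section AuxGeneric

variable {σ : Signature} {E : EqTheory σ} {X : Type}

theorem lift_out {α β : Sort _} {s : Setoid α} (f : α → β)
    (hf : ∀ a b, a ≈ b → f a = f b) (q : Quotient s) :
    f q.out = Quotient.lift f hf q := by
  conv_rhs => rw [← Quotient.out_eq q]
  rfl

theorem mk_op (o : σ.Op) (ts : Fin (σ.arity o) → Term σ X) :
    Quotient.mk (freeSetoid σ E X) (Term.op o ts)
      = (FreeAlg σ E X).interp o (fun i => Quotient.mk (freeSetoid σ E X) (ts i)) := by
  apply Quotient.sound
  intro A hA v
  show A.interp o _ = A.interp o _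
  exact congrArg _ (funext fun i =>
    (Quotient.exact (Quotient.out_eq (Quotient.mk (freeSetoid σ E X) (ts i))) A hA v).symm)

theorem Hom.eval_comm {A B : Alg σ} (f : Hom A B) (v : X → A.carrier) :
    ∀ t : Term σ X, f.toFun (t.eval A v) = t.eval B (fun x => f.toFun (v x))
  | .var _ => rfl
  | .op o ts => by
      show f.toFun (A.interp o _) = B.interp o _
      rw [f.map_op]
      exact congrArg _ (funext fun i => Hom.eval_comm f v (ts i))

theorem eval_gen : ∀ t : Term σ X,
    t.eval (FreeAlg σ E X) (FreeAlg.gen σ E X) = Quotient.mk (freeSetoid σ E X) t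
  | .var _ => rfl
  | .op o ts => by
      show (FreeAlg σ E X).interp o _ = _
      rw [mk_op]
      exact congrArg _ (funext fun i => eval_gen (ts i))

theorem hom_mk {C : Alg σ} (f : Hom (FreeAlg σ E X) C) (t : Term σ X) :
    f.toFun (Quotient.mk (freeSetoid σ E X) t)
      = t.eval C (fun x => f.toFun (FreeAlg.gen σ E X x)) := by
  rw [← eval_gen (E := E) t, Hom.eval_comm]

noncomputable def evalHom (C : Alg σ) (hC : C.Models E) (w : X → C.carrier) :
    Hom (FreeAlg σ E X) C where
  toFun := Quotient.lift (fun t : Term σ X => t.eval C w) (fun s t h => h C hC w)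
  map_op o as := by
    show C.interp o _ = C.interp o _
    exact congrArg _ (funext fun i => lift_out _ _ (as i))

end AuxGeneric

section AuxCong

variable {σ : Signature} {E : EqTheory σ} {X : Type}

theorem cgGen_isCong (A : Alg σ) (S : Set (A.carrier × A.carrier)) :
    IsCong A (cgGen A S) := by
  refine ⟨⟨?_, ?_, ?_⟩, ?_⟩
  · intro a r hr _; exact hr.1.refl a
  · intro a b h r hr hS; exact hr.1.symm (h r hr hS)
  · intro a b c h1 h2 r hr hS; exact hr.1.trans (h1 r hr hS) (h2 r hr hS)
  · intro o as bs h r hr hS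
    exact hr.2 o as bs (fun i => h i r hr hS)

theorem cgGen_self (A : Alg σ) (S : Set (A.carrier × A.carrier)) {p} (hp : p ∈ S) :
    cgGen A S p.1 p.2 := fun _ _ hS => hS p hp

theorem kerHom_isCong {A B : Alg σ} (f : Hom A B) : IsCong A (kerHom f) := by
  refine ⟨⟨fun _ => rfl, Eq.symm, Eq.trans⟩, ?_⟩
  intro o as bs h
  show f.toFun _ = f.toFun _
  rw [f.map_op, f.map_op]
  exact congrArg _ (funext h)

theorem cgGen_transport {A A' : Alg σ} (F : Hom A A') (G : A'.carrier → A.carrier)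
    (hGF : ∀ a, G (F.toFun a) = a) (hFG : ∀ a', F.toFun (G a') = a')
    (S : Set (A.carrier × A.carrier)) :
    cgGen A' (Prod.map F.toFun F.toFun '' S) = fun x y => cgGen A S (G x) (G y) := by
  have hFinj : Function.Injective F.toFun := fun a b h => by rw [← hGF a, h, hGF]
  have hGhom : ∀ (o : σ.Op) (xs : Fin (σ.arity o) → A'.carrier),
      G (A'.interp o xs) = A.interp o (fun i => G (xs i)) := by
    intro o xs
    apply hFinj
    rw [hFG, F.map_op]
    exact congrArg _ (funext fun i => (hFG (xs i)).symm)
  funext x y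
  apply propext
  constructor
  · intro h
    refine h (fun x y => cgGen A S (G x) (G y)) ⟨⟨?_, ?_, ?_⟩, ?_⟩ ?_
    · intro a; exact (cgGen_isCong A S).1.refl _
    · intro a b hh; exact (cgGen_isCong A S).1.symm hh
    · intro a b c h1 h2; exact (cgGen_isCong A S).1.trans h1 h2
    · intro o xs ys hh
      show cgGen A S (G (A'.interp o xs)) (G (A'.interp o ys))
      rw [hGhom, hGhom]
      exact (cgGen_isCong A S).2 o _ _ hh
    · rintro p ⟨q, hq, rfl⟩
      show cgGen A S (G (F.toFun q.1)) (G (F.toFun q.2))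
      rw [hGF, hGF]
      exact cgGen_self A S hq
  · intro h
    have key : ∀ a b, cgGen A S a b →
        cgGen A' (Prod.map F.toFun F.toFun '' S) (F.toFun a) (F.toFun b) := by
      intro a b hab
      refine hab (fun a b => cgGen A' (Prod.map F.toFun F.toFun '' S) (F.toFun a) (F.toFun b))
        ⟨⟨?_, ?_, ?_⟩, ?_⟩ ?_
      · intro a; exact (cgGen_isCong A' _).1.refl _
      · intro a b hh; exact (cgGen_isCong A' _).1.symm hh
      · intro a b c h1 h2; exact (cgGen_isCong A' _).1.trans h1 h2
      · intro o as bs hh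
        show cgGen A' _ (F.toFun (A.interp o as)) (F.toFun (A.interp o bs))
        rw [F.map_op, F.map_op]
        exact (cgGen_isCong A' _).2 o _ _ hh
      · intro p hp; exact cgGen_self A' (Prod.map F.toFun F.toFun '' S) ⟨p, hp, rfl⟩
    have h2 := key _ _ h
    rw [hFG, hFG] at h2
    exact h2

theorem cgGen_retract {F G : Alg σ} (ρ : Hom F G) (ι : Hom G F)
    (hρι : ∀ x, ρ.toFun (ι.toFun x) = x) (S : Set (G.carrier × G.carrier))
    (U : Set F.carrier) (T : Set (F.carrier × F.carrier))
    (hT : T = Prod.map ι.toFun ι.toFun '' S ∪ (fun a => (a, ι.toFun (ρ.toFun a))) '' U)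
    (hgen : ∀ a : F.carrier, cgGen F T a (ι.toFun (ρ.toFun a))) :
    (fun a b => cgGen G S (ρ.toFun a) (ρ.toFun b)) = cgGen F T := by
  funext a b; apply propext
  constructor
  · intro h
    have h2 : cgGen F T (ι.toFun (ρ.toFun a)) (ι.toFun (ρ.toFun b)) := by
      refine h (fun x y => cgGen F T (ι.toFun x) (ι.toFun y)) ⟨⟨?_, ?_, ?_⟩, ?_⟩ ?_
      · intro x; exact (cgGen_isCong F T).1.refl _
      · intro x y hh; exact (cgGen_isCong F T).1.symm hh
      · intro x y z h1 h2; exact (cgGen_isCong F T).1.trans h1 h2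
      · intro o xs ys hh
        show cgGen F T (ι.toFun (G.interp o xs)) (ι.toFun (G.interp o ys))
        rw [ι.map_op, ι.map_op]
        exact (cgGen_isCong F T).2 o _ _ hh
      · intro q hq
        exact cgGen_self F T (by rw [hT]; exact Or.inl ⟨q, hq, rfl⟩)
    exact (cgGen_isCong F T).1.trans (hgen a)
      ((cgGen_isCong F T).1.trans h2 ((cgGen_isCong F T).1.symm (hgen b)))
  · intro h
    refine h (fun x y => cgGen G S (ρ.toFun x) (ρ.toFun y)) ⟨⟨?_, ?_, ?_⟩, ?_⟩ ?_
    · intro x; exact (cgGen_isCong G S).1.refl _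
    · intro x y hh; exact (cgGen_isCong G S).1.symm hh
    · intro x y z h1 h2; exact (cgGen_isCong G S).1.trans h1 h2
    · intro o xs ys hh
      show cgGen G S (ρ.toFun (F.interp o xs)) (ρ.toFun (F.interp o ys))
      rw [ρ.map_op, ρ.map_op]
      exact (cgGen_isCong G S).2 o _ _ hh
    · intro q hq
      rw [hT] at hq
      rcases hq with ⟨q', hq', rfl⟩ | ⟨a', _, rfl⟩
      · show cgGen G S (ρ.toFun (ι.toFun q'.1)) (ρ.toFun (ι.toFun q'.2))
        rw [hρι, hρι]
        exact cgGen_self G S hq'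
      · show cgGen G S (ρ.toFun a') (ρ.toFun (ι.toFun (ρ.toFun a')))
        rw [hρι]
        exact (cgGen_isCong G S).1.refl _

theorem subGen_isSubalg (A : Alg σ) (Gs : Set A.carrier) : IsSubalg A (subGen A Gs) :=
  fun o as h T hT hG => hT o as (fun i => h i T hT hG)

theorem subset_subGen (A : Alg σ) (Gs : Set A.carrier) : Gs ⊆ subGen A Gs :=
  fun _ hg _ _ hG => hG hg

theorem subGen_min {A : Alg σ} {Gs T : Set A.carrier} (hT : IsSubalg A T) (hG : Gs ⊆ T) :
    subGen A Gs ⊆ T :=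
  fun _ h => h T hT hG

theorem subAlg_eval {A : Alg σ} {S : Set A.carrier} (hS : IsSubalg A S)
    (v : X → ↥S) : ∀ t : Term σ X,
      (t.eval (A.subAlg S hS) v).1 = t.eval A (fun x => (v x).1)
  | .var _ => rfl
  | .op o ts => by
      show A.interp o _ = A.interp o _
      exact congrArg _ (funext fun i => subAlg_eval hS v (ts i))

theorem subAlg_models {A : Alg σ} (hA : A.Models E) {S : Set A.carrier}
    (hS : IsSubalg A S) : (A.subAlg S hS).Models E := by
  intro p hp v
  apply Subtype.ext
  refine (subAlg_eval hS v p.1).trans (Eq.trans ?_ (subAlg_eval hS v p.2).symm)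
  exact hA p hp _

theorem Term.rename_rename {X Y Z : Type} (h1 : X → Y) (h2 : Y → Z) :
    ∀ t : Term σ X, (t.rename h1).rename h2 = t.rename (h2 ∘ h1)
  | .var _ => rfl
  | .op o ts => by
      show Term.op o _ = Term.op o _
      exact congrArg _ (funext fun i => Term.rename_rename h1 h2 (ts i))

theorem Term.rename_id : ∀ t : Term σ X, t.rename id = t
  | .var _ => rfl
  | .op o ts => by
      show Term.op o _ = Term.op o _
      exact congrArg _ (funext fun i => Term.rename_id (ts i))

noncomputable def renameHom {X Y : Type} (h : X → Y) :
    Hom (FreeAlg σ E X) (FreeAlg σ E Y) where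
  toFun := FreeAlg.rename h
  map_op o as := by
    show Quotient.mk _ (Term.op o fun i => ((as i).out).rename h) = _
    rw [mk_op]
    exact congrArg _ (funext fun i =>
      lift_out (fun t : Term σ X => Quotient.mk (freeSetoid σ E Y) (t.rename h)) _ (as i))

def Term.substT {X Y : Type} (w : X → Term σ Y) : Term σ X → Term σ Y
  | .var x => w x
  | .op o ts => .op o fun i => (ts i).substT w

theorem Term.eval_substT {X Y : Type} (A : Alg σ) (w : X → Term σ Y) (v : Y → A.carrier) :
    ∀ t : Term σ X, (t.substT w).eval A v = t.eval A (fun x => (w x).eval A v)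
  | .var _ => rfl
  | .op o ts => by
      show A.interp o _ = A.interp o _
      exact congrArg _ (funext fun i => Term.eval_substT A w v (ts i))

theorem eval_free {X' : Type} (v : X' → FreeCarrier σ E X) :
    ∀ t : Term σ X', t.eval (FreeAlg σ E X) v
      = Quotient.mk (freeSetoid σ E X) (t.substT (fun x => (v x).out))
  | .var x => (Quotient.out_eq _).symm
  | .op o ts => by
      show (FreeAlg σ E X).interp o _
        = Quotient.mk (freeSetoid σ E X) (Term.op o fun i => (ts i).substT (fun x => (v x).out))
      rw [mk_op]
      exact congrArg _ (funext fun i => eval_free v (ts i))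

theorem freeAlg_models : (FreeAlg σ E X).Models E := by
  intro q hq v
  refine (eval_free v q.1).trans (Eq.trans ?_ (eval_free v q.2).symm)
  apply Quotient.sound
  intro A hA u
  rw [Term.eval_substT, Term.eval_substT]
  exact hA q hq _

end AuxCong

section AuxSigC

variable {σ : Signature} {E : EqTheory σ} {k : ℕ} {X : Type}

/-- The `σ`-reduct of a `σ(c̄)`-algebra. -/
def redAlg (B : Alg (sigC σ k)) : Alg σ where
  carrier := B.carrier
  interp o := B.interp (Sum.inl o)

/-- The interpretation of the `c`-th constant. -/
def constB (B : Alg (sigC σ k)) (c : Fin k) : B.carrier :=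
  B.interp (Sum.inr c) (fun i => i.elim0)

theorem interp_const (B : Alg (sigC σ k)) (c : Fin k)
    (as : Fin ((sigC σ k).arity (Sum.inr c)) → B.carrier) :
    B.interp (Sum.inr c) as = constB B c :=
  congrArg _ (funext fun i => i.elim0)

theorem isCong_red_iff (B : Alg (sigC σ k)) (r : B.carrier → B.carrier → Prop) :
    IsCong (redAlg B) r ↔ IsCong B r := by
  constructor
  · rintro ⟨he, hop⟩
    refine ⟨he, ?_⟩
    rintro (o | c) as bs h
    · exact hop o as bs h
    · rw [interp_const, interp_const]
      exact he.refl _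
  · rintro ⟨he, hop⟩
    exact ⟨he, fun o as bs h => hop (Sum.inl o) as bs h⟩

theorem cgGen_red (B : Alg (sigC σ k)) (S : Set (B.carrier × B.carrier)) :
    cgGen (redAlg B) S = cgGen B S := by
  funext a b
  apply propext
  constructor
  · intro h r hr hS; exact h r ((isCong_red_iff B r).mpr hr) hS
  · intro h r hr hS; exact h r ((isCong_red_iff B r).mp hr) hS

/-- Translation of `σ(c̄)`-terms into `σ`-terms with extra variables. -/
def trT : Term (sigC σ k) X → Term σ (Fin k ⊕ X)
  | .var x => .var (Sum.inr x)
  | .op (Sum.inl o) ts => .op o (fun i => trT (ts i))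
  | .op (Sum.inr c) _ => .var (Sum.inl c)

/-- Translation of `σ`-terms with extra variables into `σ(c̄)`-terms. -/
def bkT : Term σ (Fin k ⊕ X) → Term (sigC σ k) X
  | .var (Sum.inl c) => .op (Sum.inr c) (fun i => i.elim0)
  | .var (Sum.inr x) => .var x
  | .op o ts => .op (Sum.inl o) (fun i => bkT (ts i))

theorem trT_bkT : ∀ u : Term σ (Fin k ⊕ X), trT (bkT u) = u
  | .var (Sum.inl _) => rfl
  | .var (Sum.inr _) => rfl
  | .op o ts => by
      show Term.op o _ = Term.op o _
      exact congrArg _ (funext fun i => trT_bkT (ts i))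

theorem bkT_trT : ∀ t : Term (sigC σ k) X, bkT (trT t) = t
  | .var _ => rfl
  | .op (Sum.inl o) ts => by
      show Term.op (σ := sigC σ k) (X := X) (Sum.inl o) _ = Term.op (Sum.inl o) _
      exact congrArg _ (funext fun i => bkT_trT (ts i))
  | .op (Sum.inr c) ts => by
      show Term.op (σ := sigC σ k) (X := X) (Sum.inr c) _ = Term.op (Sum.inr c) _
      exact congrArg _ (funext fun i => i.elim0)

/-- Expansion of a `σ`-algebra by chosen constants. -/
def expAlg (A : Alg σ) (cs : Fin k → A.carrier) : Alg (sigC σ k) where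
  carrier := A.carrier
  interp o := match o with
    | Sum.inl o => A.interp o
    | Sum.inr c => fun _ => cs c

theorem eval_inclSig (B : Alg (sigC σ k)) (v : X → B.carrier) :
    ∀ t : Term σ X, (Term.inclSig (k := k) t).eval B v = t.eval (redAlg B) v
  | .var _ => rfl
  | .op o ts => by
      show B.interp (Sum.inl o) _ = (redAlg B).interp o _
      exact congrArg _ (funext fun i => eval_inclSig B v (ts i))

theorem models_red {B : Alg (sigC σ k)} (hB : B.Models (cTheory σ E k)) :
    (redAlg B).Models E := by
  intro p hp v
  have hmem : (p.1.inclSig, p.2.inclSig) ∈ (cTheory σ E k).eqs :=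
    ⟨p.1, p.2, fun A hA u => hA p hp u, rfl⟩
  have h2 := hB _ hmem v
  exact (eval_inclSig B v p.1).symm.trans (h2.trans (eval_inclSig B v p.2))

theorem exp_models {A : Alg σ} (hA : A.Models E) (cs : Fin k → A.carrier) :
    (expAlg A cs).Models (cTheory σ E k) := by
  rintro p ⟨s, t, hst, rfl⟩ v
  show Term.eval _ v s.inclSig = Term.eval _ v t.inclSig
  rw [eval_inclSig, eval_inclSig]
  exact hst _ hA v

theorem eval_trT (B : Alg (sigC σ k)) (v : X → B.carrier) :
    ∀ t : Term (sigC σ k) X,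
      (trT t).eval (redAlg B) (Sum.elim (constB B) v) = t.eval B v
  | .var _ => rfl
  | .op (Sum.inl o) ts => by
      show (redAlg B).interp o _ = B.interp (Sum.inl o) _
      exact congrArg _ (funext fun i => eval_trT B v (ts i))
  | .op (Sum.inr c) ts => (interp_const B c _).symm

theorem eval_trT' (A : Alg σ) (cs : Fin k → A.carrier) (w : X → A.carrier) :
    ∀ t : Term (sigC σ k) X,
      (trT t).eval A (Sum.elim cs w) = t.eval (expAlg A cs) w
  | .var _ => rfl
  | .op (Sum.inl o) ts => by
      show A.interp o _ = A.interp o _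
      exact congrArg _ (funext fun i => eval_trT' A cs w (ts i))
  | .op (Sum.inr c) _ => rfl

theorem eval_bkT (B : Alg (sigC σ k)) (v : X → B.carrier) :
    ∀ u : Term σ (Fin k ⊕ X),
      (bkT u).eval B v = u.eval (redAlg B) (Sum.elim (constB B) v)
  | .var (Sum.inl c) => interp_const B c _
  | .var (Sum.inr _) => rfl
  | .op o ts => by
      show B.interp (Sum.inl o) _ = (redAlg B).interp o _
      exact congrArg _ (funext fun i => eval_bkT B v (ts i))

theorem subGen_red (B : Alg (sigC σ k)) (G : Set B.carrier) :
    subGen (redAlg B) (G ∪ Set.range (constB B)) = subGen B G := by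
  apply Set.Subset.antisymm
  · apply subGen_min
    · intro o as h
      exact subGen_isSubalg B G (Sum.inl o) as h
    · rintro x (hx | ⟨c, rfl⟩)
      · exact subset_subGen B G hx
      · exact subGen_isSubalg B G (Sum.inr c) (fun i => i.elim0) (fun i => i.elim0)
  · apply subGen_min
    · intro o as h
      cases o with
      | inl o => exact subGen_isSubalg (redAlg B) _ o as h
      | inr c =>
        rw [interp_const]
        exact subset_subGen _ _ (Or.inr ⟨c, rfl⟩)
    · intro x hx
      exact subset_subGen _ _ (Or.inl hx)

end AuxSigC

section AuxIso

variable (σ : Signature) (E : EqTheory σ) (k n : ℕ)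

noncomputable def PhiHom :
    Hom (redAlg (FreeAlg (sigC σ k) (cTheory σ E k) (Fin n))) (FreeAlg σ E (Fin (k + n))) where
  toFun := Quotient.lift
    (fun t : Term (sigC σ k) (Fin n) =>
      Quotient.mk (freeSetoid σ E (Fin (k + n)))
        ((trT t).rename (finSumFinEquiv : Fin k ⊕ Fin n ≃ Fin (k + n))))
    (fun s t hst => Quotient.sound (fun A hA v => by
      rw [Term.eval_rename, Term.eval_rename]
      have hv : (v ∘ (finSumFinEquiv : Fin k ⊕ Fin n ≃ Fin (k + n)) : Fin k ⊕ Fin n → A.carrier)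
          = Sum.elim (fun c => v (finSumFinEquiv (Sum.inl c)))
              (fun x => v (finSumFinEquiv (Sum.inr x))) := by
        funext x; cases x <;> rfl
      rw [hv, eval_trT', eval_trT']
      exact hst _ (exp_models hA _) _))
  map_op o as := by
    show Quotient.mk (freeSetoid σ E (Fin (k + n)))
        (Term.op o (fun i =>
          (trT ((as i).out)).rename (finSumFinEquiv : Fin k ⊕ Fin n ≃ Fin (k + n)))) = _
    rw [mk_op]
    exact congrArg _ (funext fun i =>
      lift_out (fun t : Term (sigC σ k) (Fin n) =>
        Quotient.mk (freeSetoid σ E (Fin (k + n)))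
          ((trT t).rename (finSumFinEquiv : Fin k ⊕ Fin n ≃ Fin (k + n)))) _ (as i))

noncomputable def PsiHom :
    Hom (FreeAlg σ E (Fin (k + n))) (redAlg (FreeAlg (sigC σ k) (cTheory σ E k) (Fin n))) where
  toFun := Quotient.lift
    (fun u : Term σ (Fin (k + n)) =>
      Quotient.mk (freeSetoid (sigC σ k) (cTheory σ E k) (Fin n))
        (bkT (u.rename (finSumFinEquiv.symm : Fin (k + n) ≃ Fin k ⊕ Fin n))))
    (fun s t hst => Quotient.sound (fun B hB v => by
      rw [eval_bkT, eval_bkT, Term.eval_rename, Term.eval_rename]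
      exact hst (redAlg B) (models_red hB) _))
  map_op o as := by
    show Quotient.mk (freeSetoid (sigC σ k) (cTheory σ E k) (Fin n))
        (Term.op (Sum.inl o) (fun i =>
          bkT (((as i).out).rename (finSumFinEquiv.symm : Fin (k + n) ≃ Fin k ⊕ Fin n)))) = _
    refine (mk_op (E := cTheory σ E k) (Sum.inl o : (sigC σ k).Op) _).trans ?_
    refine congrArg ((redAlg (FreeAlg (sigC σ k) (cTheory σ E k) (Fin n))).interp o)
      (funext fun i => ?_)
    exact lift_out (fun u : Term σ (Fin (k + n)) =>
      Quotient.mk (freeSetoid (sigC σ k) (cTheory σ E k) (Fin n))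
        (bkT (u.rename (finSumFinEquiv.symm : Fin (k + n) ≃ Fin k ⊕ Fin n)))) _ (as i)

theorem PsiPhi : ∀ q, (PsiHom σ E k n).toFun ((PhiHom σ E k n).toFun q) = q := by
  intro q
  induction q using Quotient.ind with
  | _ t =>
    show Quotient.mk (freeSetoid (sigC σ k) (cTheory σ E k) (Fin n))
        (bkT (((trT t).rename (finSumFinEquiv : Fin k ⊕ Fin n ≃ Fin (k + n))).rename
          (finSumFinEquiv.symm : Fin (k + n) ≃ Fin k ⊕ Fin n))) = _
    rw [Term.rename_rename]
    have he : ((finSumFinEquiv.symm : Fin (k + n) ≃ Fin k ⊕ Fin n) ∘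
        (finSumFinEquiv : Fin k ⊕ Fin n ≃ Fin (k + n)) : Fin k ⊕ Fin n → Fin k ⊕ Fin n) = id :=
      funext fun x => Equiv.symm_apply_apply _ x
    rw [he, Term.rename_id, bkT_trT]

theorem PhiPsi : ∀ u, (PhiHom σ E k n).toFun ((PsiHom σ E k n).toFun u) = u := by
  intro u
  induction u using Quotient.ind with
  | _ t =>
    show Quotient.mk (freeSetoid σ E (Fin (k + n)))
        ((trT (bkT (t.rename (finSumFinEquiv.symm : Fin (k + n) ≃ Fin k ⊕ Fin n)))).rename
          (finSumFinEquiv : Fin k ⊕ Fin n ≃ Fin (k + n))) = _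
    rw [trT_bkT, Term.rename_rename]
    have he : ((finSumFinEquiv : Fin k ⊕ Fin n ≃ Fin (k + n)) ∘
        (finSumFinEquiv.symm : Fin (k + n) ≃ Fin k ⊕ Fin n) : Fin (k + n) → Fin (k + n)) = id :=
      funext fun x => Equiv.apply_symm_apply _ x
    rw [he, Term.rename_id]

end AuxIso

section AuxTransfer

variable {σ : Signature} {E : EqTheory σ} {k : ℕ}

theorem finPresented_red (B : Alg (sigC σ k)) (hB : B.Models (cTheory σ E k))
    (h : FinPresented (sigC σ k) (cTheory σ E k) B) : FinPresented σ E (redAlg B) := by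
  obtain ⟨n, f, fsurj, S0, S0fin, hker⟩ := h
  have hred := models_red (E := E) hB
  let w : Fin (k + n) → (redAlg B).carrier := fun x =>
    Sum.elim (constB B) (fun j => f.toFun (FreeAlg.gen (sigC σ k) (cTheory σ E k) (Fin n) j))
      (finSumFinEquiv.symm x)
  let g := evalHom (redAlg B) hred w
  have hgΦ : ∀ q, g.toFun ((PhiHom σ E k n).toFun q) = f.toFun q := by
    intro q
    induction q using Quotient.ind with
    | _ t =>
      show ((trT t).rename (finSumFinEquiv : Fin k ⊕ Fin n ≃ Fin (k + n))).eval (redAlg B) w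
        = f.toFun (Quotient.mk (freeSetoid (sigC σ k) (cTheory σ E k) (Fin n)) t)
      rw [Term.eval_rename]
      have hwe : (w ∘ (finSumFinEquiv : Fin k ⊕ Fin n ≃ Fin (k + n)) : Fin k ⊕ Fin n → _)
          = Sum.elim (constB B)
            (fun j => f.toFun (FreeAlg.gen (sigC σ k) (cTheory σ E k) (Fin n) j)) := by
        funext x
        show Sum.elim _ _ (finSumFinEquiv.symm (finSumFinEquiv x)) = _
        rw [Equiv.symm_apply_apply]
        rfl
      rw [hwe]; refine (eval_trT B _ t).trans ?_
      exact (hom_mk f t).symm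
  refine ⟨k + n, g, ?_, ?_⟩
  · intro b
    obtain ⟨q, hq⟩ := fsurj b
    exact ⟨(PhiHom σ E k n).toFun q, (hgΦ q).trans hq⟩
  · refine ⟨Prod.map (PhiHom σ E k n).toFun (PhiHom σ E k n).toFun '' S0, S0fin.image _, ?_⟩
    have htrans := cgGen_transport (PhiHom σ E k n) (PsiHom σ E k n).toFun
      (PsiPhi σ E k n) (PhiPsi σ E k n) S0
    have hgΨ : ∀ x, g.toFun x = f.toFun ((PsiHom σ E k n).toFun x) := fun x => by
      conv_lhs => rw [← PhiPsi σ E k n x]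
      exact hgΦ _
    calc kerHom g
        = fun x y => kerHom f ((PsiHom σ E k n).toFun x) ((PsiHom σ E k n).toFun y) := by
          funext x y
          apply propext
          show g.toFun x = g.toFun y ↔ _
          rw [hgΨ x, hgΨ y]
          exact Iff.rfl
      _ = fun x y => cgGen (redAlg (FreeAlg (sigC σ k) (cTheory σ E k) (Fin n))) S0
            ((PsiHom σ E k n).toFun x) ((PsiHom σ E k n).toFun y) := by
          rw [hker, ← cgGen_red]
      _ = cgGen (FreeAlg σ E (Fin (k + n)))
            (Prod.map (PhiHom σ E k n).toFun (PhiHom σ E k n).toFun '' S0) := htrans.symm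

theorem finPresented_exp (C : Alg (sigC σ k)) (hC : C.Models (cTheory σ E k))
    (h : FinPresented σ E (redAlg C)) : FinPresented (sigC σ k) (cTheory σ E k) C := by
  obtain ⟨m, g, gsurj, Sg, Sgfin, hkerg⟩ := h
  have hred := models_red (E := E) hC
  choose p hp using fun c => gsurj (constB C c)
  let r0 : Fin (k + m) → (FreeAlg σ E (Fin m)).carrier := fun x =>
    Sum.elim p (FreeAlg.gen σ E (Fin m)) (finSumFinEquiv.symm x)
  let ρ : Hom (FreeAlg σ E (Fin (k + m))) (FreeAlg σ E (Fin m)) :=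
    evalHom (FreeAlg σ E (Fin m)) freeAlg_models r0
  let ι : Hom (FreeAlg σ E (Fin m)) (FreeAlg σ E (Fin (k + m))) :=
    renameHom ((finSumFinEquiv : Fin k ⊕ Fin m ≃ Fin (k + m)) ∘ Sum.inr)
  let w' : Fin (k + m) → (redAlg C).carrier := fun x =>
    Sum.elim (constB C) (fun j => g.toFun (FreeAlg.gen σ E (Fin m) j)) (finSumFinEquiv.symm x)
  let g' : Hom (FreeAlg σ E (Fin (k + m))) (redAlg C) := evalHom (redAlg C) hred w'
  have hρι : ∀ x, ρ.toFun (ι.toFun x) = x := by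
    intro x
    induction x using Quotient.ind with
    | _ u =>
      show ((u.rename ((finSumFinEquiv : Fin k ⊕ Fin m ≃ Fin (k + m)) ∘ Sum.inr)).eval
        (FreeAlg σ E (Fin m)) r0) = _
      rw [Term.eval_rename]
      have hr : (r0 ∘ ((finSumFinEquiv : Fin k ⊕ Fin m ≃ Fin (k + m)) ∘ Sum.inr) : Fin m → _)
          = FreeAlg.gen σ E (Fin m) := by
        funext j
        show Sum.elim _ _ (finSumFinEquiv.symm (finSumFinEquiv (Sum.inr j))) = _
        rw [Equiv.symm_apply_apply]
        rfl
      rw [hr, eval_gen]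
  have hgρ : ∀ x, g.toFun (ρ.toFun x) = g'.toFun x := by
    intro x
    induction x using Quotient.ind with
    | _ u =>
      show g.toFun (u.eval (FreeAlg σ E (Fin m)) r0) = u.eval (redAlg C) w'
      rw [Hom.eval_comm]
      refine congrArg (fun vv => Term.eval (redAlg C) vv u) (funext fun x => ?_)
      show g.toFun (Sum.elim p (FreeAlg.gen σ E (Fin m)) (finSumFinEquiv.symm x))
        = Sum.elim (constB C) (fun j => g.toFun (FreeAlg.gen σ E (Fin m) j))
          (finSumFinEquiv.symm x)
      cases finSumFinEquiv.symm x with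
      | inl c => exact hp c
      | inr j => rfl
  have hg'ι : ∀ x, g'.toFun (ι.toFun x) = g.toFun x := by
    intro x
    induction x using Quotient.ind with
    | _ u =>
      show ((u.rename ((finSumFinEquiv : Fin k ⊕ Fin m ≃ Fin (k + m)) ∘ Sum.inr)).eval
        (redAlg C) w') = _
      rw [Term.eval_rename, hom_mk g]
      refine congrArg (fun vv => Term.eval (redAlg C) vv u) (funext fun j => ?_)
      show Sum.elim _ _ (finSumFinEquiv.symm (finSumFinEquiv (Sum.inr j))) = _
      rw [Equiv.symm_apply_apply]
      rfl
  let f : Hom (FreeAlg (sigC σ k) (cTheory σ E k) (Fin m)) C :=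
    evalHom C hC (fun j => g.toFun (FreeAlg.gen σ E (Fin m) j))
  have hfΦ : ∀ q, g'.toFun ((PhiHom σ E k m).toFun q) = f.toFun q := by
    intro q
    induction q using Quotient.ind with
    | _ t =>
      show ((trT t).rename (finSumFinEquiv : Fin k ⊕ Fin m ≃ Fin (k + m))).eval (redAlg C) w'
        = t.eval C (fun j => g.toFun (FreeAlg.gen σ E (Fin m) j))
      rw [Term.eval_rename]
      have hwe : (w' ∘ (finSumFinEquiv : Fin k ⊕ Fin m ≃ Fin (k + m)) : Fin k ⊕ Fin m → _)
          = Sum.elim (constB C) (fun j => g.toFun (FreeAlg.gen σ E (Fin m) j)) := by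
        funext x
        show Sum.elim _ _ (finSumFinEquiv.symm (finSumFinEquiv x)) = _
        rw [Equiv.symm_apply_apply]
        rfl
      rw [hwe]; exact eval_trT C _ t
  have hfΨ : ∀ y, f.toFun ((PsiHom σ E k m).toFun y) = g'.toFun y := fun y => by
    conv_rhs => rw [← PhiPsi σ E k m y]
    exact (hfΦ _).symm
  let T : Set ((FreeAlg σ E (Fin (k + m))).carrier × (FreeAlg σ E (Fin (k + m))).carrier) :=
    Prod.map ι.toFun ι.toFun '' Sg ∪
      (fun a => (a, ι.toFun (ρ.toFun a))) '' Set.range (FreeAlg.gen σ E (Fin (k + m)))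
  have hgen : ∀ a, cgGen (FreeAlg σ E (Fin (k + m))) T a (ι.toFun (ρ.toFun a)) := by
    intro a
    induction a using Quotient.ind with
    | _ t =>
      induction t with
      | var x =>
        exact cgGen_self _ T (Or.inr ⟨FreeAlg.gen σ E (Fin (k + m)) x, ⟨x, rfl⟩, rfl⟩)
      | op o ts ih =>
        rw [mk_op]
        have h1 := (cgGen_isCong (FreeAlg σ E (Fin (k + m))) T).2 o
          (fun i => Quotient.mk (freeSetoid σ E (Fin (k + m))) (ts i))
          (fun i => ι.toFun (ρ.toFun (Quotient.mk (freeSetoid σ E (Fin (k + m))) (ts i)))) ih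
        have h2 : (FreeAlg σ E (Fin (k + m))).interp o
            (fun i => ι.toFun (ρ.toFun (Quotient.mk (freeSetoid σ E (Fin (k + m))) (ts i))))
            = ι.toFun (ρ.toFun ((FreeAlg σ E (Fin (k + m))).interp o
              (fun i => Quotient.mk (freeSetoid σ E (Fin (k + m))) (ts i)))) := by
          exact ((congrArg ι.toFun (ρ.map_op o _)).trans (ι.map_op o _)).symm
        rw [h2] at h1
        exact h1
  have hretr := cgGen_retract ρ ι hρι Sg
    (Set.range (FreeAlg.gen σ E (Fin (k + m)))) T rfl hgen
  have Tfin : T.Finite := (Sgfin.image _).union ((Set.finite_range _).image _)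
  have hkerg' : kerHom g' = cgGen (FreeAlg σ E (Fin (k + m))) T := by
    have h1 : kerHom g' = fun a b =>
        cgGen (FreeAlg σ E (Fin m)) Sg (ρ.toFun a) (ρ.toFun b) := by
      funext a b
      apply propext
      show g'.toFun a = g'.toFun b ↔ _
      rw [← hgρ a, ← hgρ b]
      show kerHom g (ρ.toFun a) (ρ.toFun b) ↔ _
      rw [hkerg]
    rw [h1, hretr]
  refine ⟨m, f, ?_, ?_⟩
  · intro b
    obtain ⟨q, hq⟩ := gsurj b
    refine ⟨(PsiHom σ E k m).toFun (ι.toFun q), ?_⟩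
    rw [hfΨ, hg'ι]
    exact hq
  · refine ⟨Prod.map (PsiHom σ E k m).toFun (PsiHom σ E k m).toFun '' T, Tfin.image _, ?_⟩
    have htrans := cgGen_transport (PsiHom σ E k m) (PhiHom σ E k m).toFun
      (PhiPsi σ E k m) (PsiPhi σ E k m) T
    calc kerHom f
        = fun (a b : (FreeAlg (sigC σ k) (cTheory σ E k) (Fin m)).carrier) =>
            kerHom g' ((PhiHom σ E k m).toFun a) ((PhiHom σ E k m).toFun b) := by
          funext a b
          apply propext
          show f.toFun a = f.toFun b ↔ _
          rw [← hfΦ a, ← hfΦ b]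
          exact Iff.rfl
      _ = fun (a b : (FreeAlg (sigC σ k) (cTheory σ E k) (Fin m)).carrier) =>
            cgGen (FreeAlg σ E (Fin (k + m))) T
            ((PhiHom σ E k m).toFun a) ((PhiHom σ E k m).toFun b) := by rw [hkerg']
      _ = fun (a b : (FreeAlg (sigC σ k) (cTheory σ E k) (Fin m)).carrier) =>
            cgGen (redAlg (FreeAlg (sigC σ k) (cTheory σ E k) (Fin m)))
            (Prod.map (PsiHom σ E k m).toFun (PsiHom σ E k m).toFun '' T) a b := htrans.symm
      _ = cgGen (FreeAlg (sigC σ k) (cTheory σ E k) (Fin m))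
            (Prod.map (PsiHom σ E k m).toFun (PsiHom σ E k m).toFun '' T) :=
              cgGen_red (FreeAlg (sigC σ k) (cTheory σ E k) (Fin m)) _

end AuxTransfer


/-- Lemma 5.12: if a variety `V` (possibly without constants) is
coherent, then so is the variety `V_{c̄}` obtained by adding a finite nonempty set
of new constants and keeping all `V`-valid identities. -/
theorem stmt17 (σ : Signature) (E : EqTheory σ) (k : ℕ) (hk : 0 < k) :
    Coherent σ E → Coherent (sigC σ k) (cTheory σ E k) := by
  intro hcoh B hB hBfp S hS hG
  obtain ⟨G, hGfin, hSG⟩ := hG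
  have hS' : IsSubalg (redAlg B) S := fun o as h => hS (Sum.inl o) as h
  have hfp' : FinPresented σ E ((redAlg B).subAlg S hS') :=
    hcoh (redAlg B) (models_red hB) (finPresented_red B hB hBfp) S hS'
      ⟨G ∪ Set.range (constB B), hGfin.union (Set.finite_range _),
        by rw [subGen_red]; exact hSG⟩
  exact finPresented_exp (B.subAlg S hS) (subAlg_models hB hS) hfp'
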